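/- Let n be a positive integer and w : {-1,1}^n → [0,∞) a weight function with nonempty support. For every β with 0 < β ≤ 1/2, there exist a point x̄ ∈ {-1,1}^n with w(x̄) > 0 and an integer m with 0 ≤ m ≤ n such that R(w) ≥ log₂ w(x̄) + m and w(x̄) ≥ (1−β)^{n−m} · β^m · Z(w). -/

import Mathlib

open Finset

/-- Map a boolean to the corresponding element of `{-1, 1} ⊆ ℝ`. -/
noncomputable def sgn (b : Bool) : ℝ := if b then 1 else -1

/-- Standard inner product on `ℝ^ι` restricted to the cube `{-1,1}^ι`. -/
noncomputable def ip {ι : Type*} [Fintype ι] [DecidableEq ι] (c x : ι → Bool) : ℝ :=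
  ∑ i, sgn (c i) * sgn (x i)

/-- `δ(c, w)`: the maximum over the support of `w` of `⟨c,x⟩ + log₂ w(x)`. -/
noncomputable def wdelta {ι : Type*} [Fintype ι] [DecidableEq ι] (c : ι → Bool) (w : (ι → Bool) → ℝ) : ℝ :=
  sSup {y : ℝ | ∃ x, 0 < w x ∧ y = ip c x + Real.logb 2 (w x)}

/-- The weighted Rademacher complexity `R(w) = E_c[δ(c,w)]`, `c` uniform on the cube. -/
noncomputable def wRad {ι : Type*} [Fintype ι] [DecidableEq ι] (w : (ι → Bool) → ℝ) : ℝ :=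
  (∑ c : ι → Bool, wdelta c w) / 2 ^ (Fintype.card ι)

/-- `Z(w)`: the total weight. -/
noncomputable def Zw {ι : Type*} [Fintype ι] [DecidableEq ι] (w : (ι → Bool) → ℝ) : ℝ := ∑ x, w x

/-- `w_min`: the smallest positive weight. -/
noncomputable def wmin {ι : Type*} [Fintype ι] [DecidableEq ι] (w : (ι → Bool) → ℝ) : ℝ :=
  sInf {y : ℝ | ∃ x, 0 < w x ∧ y = w x}

/-- `w_max`: the largest weight. -/
noncomputable def wmax {ι : Type*} [Fintype ι] [DecidableEq ι] (w : (ι → Bool) → ℝ) : ℝ :=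
  sSup {y : ℝ | ∃ x, y = w x}

/-!
For each support point `x` let `m(x) = min(n, ⌊R(w) - log₂ w(x)⌋)`. A set of more than
`∑_{i ≤ j} C(n, i)` points of the cube (more than a Hamming ball of radius `j`) satisfies
`E_c max_x ⟨c, x⟩ ≥ j + 1`, by splitting the cube along one coordinate. Applied to the support
points with `m(x) ≤ j`, on which `log₂ w(x) > R(w) - j - 1`, this would give `R(w) > R(w)`; so
there are at most `∑_{i ≤ j} C(n, i)` of them. With these counts, Abel summation against the
nonincreasing weights `(1-β)^(n-j) β^j` bounds `∑_x (1-β)^(n-m(x)) β^m(x)` by the binomial sum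
`∑_j C(n, j) (1-β)^(n-j) β^j = 1`, so some `x` carries weight at least
`(1-β)^(n-m(x)) β^m(x) Z(w)`.
-/

section Cube

variable {ι : Type*} [Fintype ι] [DecidableEq ι]

lemma sgn_mul_self (b : Bool) : sgn b * sgn b = 1 := by cases b <;> simp [sgn]

lemma ip_not_left (c x : ι → Bool) : ip (fun i => !c i) x = -ip c x := by
  simp only [ip, ← sum_neg_distrib]
  refine sum_congr rfl fun i _ => ?_
  cases c i <;> cases x i <;> simp [sgn]

lemma sum_ip_left (x : ι → Bool) : ∑ c, ip c x = 0 := by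
  have h : ∑ c : ι → Bool, ip (fun i => !c i) x = ∑ c, ip c x :=
    (Equiv.piCongrRight fun _ => Equiv.boolNot).sum_comp (fun c => ip c x)
  simp only [ip_not_left, sum_neg_distrib] at h
  linarith

lemma le_wdelta (c : ι → Bool) (w : (ι → Bool) → ℝ) {x : ι → Bool} (hx : 0 < w x) :
    ip c x + Real.logb 2 (w x) ≤ wdelta c w := by
  refine le_csSup ?_ ⟨x, hx, rfl⟩
  refine (Set.finite_range fun x => ip c x + Real.logb 2 (w x)).bddAbove.mono ?_
  rintro y ⟨x, -, rfl⟩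
  exact ⟨x, rfl⟩

lemma sum_wdelta (w : (ι → Bool) → ℝ) :
    ∑ c, wdelta c w = 2 ^ Fintype.card ι * wRad w := by
  rw [wRad, mul_div_cancel₀ _ (by positivity)]

lemma sum_ip_add_logb_le (w : (ι → Bool) → ℝ) (φ : (ι → Bool) → ι → Bool)
    (hφ : ∀ c, 0 < w (φ c)) :
    ∑ c, (ip c (φ c) + Real.logb 2 (w (φ c))) ≤ 2 ^ Fintype.card ι * wRad w :=
  (sum_wdelta w).symm ▸ sum_le_sum fun c _ => le_wdelta c w (hφ c)

lemma logb_le_wRad (w : (ι → Bool) → ℝ) {x : ι → Bool} (hx : 0 < w x) :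
    Real.logb 2 (w x) ≤ wRad w := by
  have h := sum_ip_add_logb_le w (fun _ => x) fun _ => hx
  rw [sum_add_distrib, sum_ip_left, sum_const, card_univ, Fintype.card_fun, Fintype.card_bool,
    nsmul_eq_mul, zero_add] at h
  push_cast at h
  exact le_of_mul_le_mul_left h (by positivity)

end Cube

section Slices

variable {n : ℕ}

lemma ip_cons (b b' : Bool) (c y : Fin n → Bool) :
    ip (Fin.cons b c : Fin (n + 1) → Bool) (Fin.cons b' y) = sgn b * sgn b' + ip c y := by
  simp [ip, Fin.sum_univ_succ]

lemma sum_cube_succ {M : Type*} [AddCommMonoid M] (g : (Fin (n + 1) → Bool) → M) :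
    ∑ c, g c = ∑ b, ∑ c : Fin n → Bool, g (Fin.cons b c) := by
  rw [← (Fin.consEquiv fun _ => Bool).sum_comp, Fintype.sum_prod_type]
  rfl

lemma sum_ip_cons_cons (τ : Bool → Bool) (ψ : Bool → (Fin n → Bool) → Fin n → Bool) :
    ∑ c : Fin (n + 1) → Bool, ip c (Fin.cons (τ (c 0)) (ψ (c 0) (Fin.tail c))) =
      ∑ b, (2 ^ n * (sgn b * sgn (τ b)) + ∑ c, ip c (ψ b c)) := by
  simp [sum_cube_succ, ip_cons, sum_add_distrib]

def cubeSlice (A : Finset (Fin (n + 1) → Bool)) (b : Bool) : Finset (Fin n → Bool) :=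
  {y | Fin.cons b y ∈ A}

lemma mem_cubeSlice {A : Finset (Fin (n + 1) → Bool)} {b : Bool} {y : Fin n → Bool} :
    y ∈ cubeSlice A b ↔ Fin.cons b y ∈ A := by
  simp [cubeSlice]

lemma card_eq_sum_card_cubeSlice (A : Finset (Fin (n + 1) → Bool)) :
    #A = ∑ b, #(cubeSlice A b) := by
  simp only [cubeSlice, card_filter]
  rw [← sum_cube_succ fun x => if x ∈ A then 1 else 0, ← card_filter, filter_univ_mem]

end Slices

lemma sum_range_choose_succ_succ (n k : ℕ) :
    ∑ j ∈ range (k + 1), (n + 1).choose j =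
      ∑ j ∈ range (k + 1), n.choose j + ∑ j ∈ range k, n.choose j := by
  simp only [sum_range_succ', Nat.choose_succ_succ, sum_add_distrib, Nat.choose_zero_right]
  ring

/-- `∑ j ∈ range k, n.choose j` is the size of a Hamming ball of radius `k - 1`; the selection `φ`
witnesses `E_c max_{x ∈ A} ⟨c, x⟩ ≥ k`. -/
theorem exists_selection_sum_ip_ge : ∀ {n : ℕ} (A : Finset (Fin n → Bool)) (k : ℕ),
    ∑ j ∈ range k, n.choose j < #A →
    ∃ φ : (Fin n → Bool) → Fin n → Bool, (∀ c, φ c ∈ A) ∧ (k * 2 ^ n : ℝ) ≤ ∑ c, ip c (φ c)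
  | _, A, 0, hA => by
    obtain ⟨x, hx⟩ := card_pos.1 hA
    exact ⟨fun _ => x, fun _ => hx, by simp [sum_ip_left]⟩
  | 0, A, k + 1, hA => by
    have h1 : 1 ≤ ∑ j ∈ range (k + 1), (0 : ℕ).choose j := by simp [sum_range_succ']
    have h2 : #A ≤ 1 := by simpa using card_le_univ A
    omega
  | n + 1, A, k + 1, hA => by
    rw [sum_range_choose_succ_succ] at hA
    by_cases hbig : ∃ b, ∑ j ∈ range (k + 1), n.choose j < #(cubeSlice A b)
    · -- a slice beyond radius `k`: the first coordinate adds `sgn (c 0) * sgn b`, of mean `0`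
      obtain ⟨b, hb⟩ := hbig
      obtain ⟨ψ, hψA, hψ⟩ := exists_selection_sum_ip_ge (cubeSlice A b) (k + 1) hb
      refine ⟨fun c => Fin.cons b (ψ (Fin.tail c)), fun c => mem_cubeSlice.1 (hψA _), ?_⟩
      have h := sum_ip_cons_cons (fun _ => b) (fun _ => ψ)
      simp only [Fintype.sum_bool] at h
      rw [h, pow_succ]
      push_cast at hψ
      cases b <;> norm_num [sgn] <;> linarith
    · -- both slices beyond radius `k - 1`: matching the first coordinate to `c 0` gains `1`
      simp only [not_exists, not_lt] at hbig
      have hcard : #A = #(cubeSlice A true) + #(cubeSlice A false) := by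
        simpa using card_eq_sum_card_cubeSlice A
      have hsmall : ∀ b, ∑ j ∈ range k, n.choose j < #(cubeSlice A b) := by
        have := hbig true; have := hbig false
        intro b; cases b <;> omega
      choose ψ hψA hψ using fun b => exists_selection_sum_ip_ge (cubeSlice A b) k (hsmall b)
      refine ⟨fun c => Fin.cons (c 0) (ψ (c 0) (Fin.tail c)),
        fun c => mem_cubeSlice.1 (hψA _ _), ?_⟩
      have h := sum_ip_cons_cons id ψ
      simp only [id, sgn_mul_self, Fintype.sum_bool] at h
      rw [h, pow_succ]
      have := hψ true; have := hψ false
      push_cast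
      linarith

theorem sum_comp_le_of_card_filter_le {α : Type*} (c : ℕ → ℕ) (N : ℕ) (s : Finset α)
    (m : α → ℕ) (f : ℕ → ℝ) (hm : ∀ x ∈ s, m x ≤ N) (hf : ∀ j < N, f (j + 1) ≤ f j)
    (hfN : 0 ≤ f N) (hcard : ∀ j ≤ N, #{x ∈ s | m x ≤ j} ≤ ∑ i ∈ range (j + 1), c i) :
    ∑ x ∈ s, f (m x) ≤ ∑ j ∈ range (N + 1), c j * f j := by
  induction N generalizing s f with
  | zero =>
    have hm0 : ∀ x ∈ s, m x = 0 := fun x hx => Nat.le_zero.1 (hm x hx)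
    have hs : #s ≤ c 0 := by simpa [filter_true_of_mem hm0] using hcard 0 le_rfl
    rw [sum_congr rfl fun x hx => by rw [hm0 x hx], sum_const, nsmul_eq_mul]
    simpa using mul_le_mul_of_nonneg_right (Nat.cast_le.2 hs : (#s : ℝ) ≤ c 0) hfN
  | succ N ih =>
    -- peel off the constant `f (N + 1)`; the remainder vanishes at level `N + 1`
    set g : ℕ → ℝ := fun j => f j - f (N + 1)
    have hs : #s ≤ ∑ i ∈ range (N + 2), c i := by
      simpa [filter_true_of_mem hm] using hcard (N + 1) le_rfl
    have hrest : ∑ x ∈ s, g (m x) = ∑ x ∈ s with m x ≤ N, g (m x) := by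
      refine (sum_filter_of_ne fun x hx hne => ?_).symm
      by_contra h
      exact hne (by simp [g, le_antisymm (hm x hx) (by omega)])
    have hih := ih {x ∈ s | m x ≤ N} g (fun x hx => (mem_filter.1 hx).2)
      (fun j hj => by simp only [g]; linarith [hf j (by omega)])
      (by simp only [g]; linarith [hf N (by omega)])
      fun j hj => by
        have hiff : ∀ x, m x ≤ N ∧ m x ≤ j ↔ m x ≤ j :=
          fun x => ⟨And.right, fun h => ⟨h.trans hj, h⟩⟩
        simpa [filter_filter, hiff] using hcard j (by omega)
    have hsplit : ∑ x ∈ s, f (m x) = #s * f (N + 1) + ∑ x ∈ s, g (m x) := by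
      simp [g, sum_sub_distrib]
    have hsR : (#s : ℝ) * f (N + 1) ≤ (∑ i ∈ range (N + 2), c i : ℕ) * f (N + 1) :=
      mul_le_mul_of_nonneg_right (Nat.cast_le.2 hs) hfN
    rw [hsplit, hrest]
    calc _ ≤ (∑ i ∈ range (N + 2), c i : ℕ) * f (N + 1) + ∑ j ∈ range (N + 1), c j * g j :=
          add_le_add hsR hih
      _ = ∑ j ∈ range (N + 2), c j * f j := by
          simp only [g, mul_sub, sum_sub_distrib, ← sum_mul, sum_range_succ _ (N + 1)]
          push_cast
          ring

section Levels

variable {n : ℕ} (w : (Fin n → Bool) → ℝ)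

noncomputable def posSupport : Finset (Fin n → Bool) := {x | 0 < w x}

omit w in
@[simp] lemma mem_posSupport {w : (Fin n → Bool) → ℝ} {x : Fin n → Bool} :
    x ∈ posSupport w ↔ 0 < w x := by
  simp [posSupport]

noncomputable def level (x : Fin n → Bool) : ℕ :=
  min n ⌊wRad w - Real.logb 2 (w x)⌋₊

lemma level_le (x : Fin n → Bool) : level w x ≤ n := min_le_left _ _

lemma level_le_wRad_sub {x : Fin n → Bool} (hx : 0 < w x) :
    (level w x : ℝ) ≤ wRad w - Real.logb 2 (w x) :=
  (Nat.cast_le.2 (min_le_right _ _)).trans (Nat.floor_le (sub_nonneg.2 (logb_le_wRad w hx)))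

lemma wRad_sub_lt_of_level_le {x : Fin n → Bool} {j : ℕ} (hj : j < n) (h : level w x ≤ j) :
    wRad w - Real.logb 2 (w x) < j + 1 := by
  have : ⌊wRad w - Real.logb 2 (w x)⌋₊ < j + 1 := by
    have := min_le_iff.1 h; omega
  exact_mod_cast (Nat.floor_lt' (Nat.succ_ne_zero j)).1 this

lemma card_level_le {j : ℕ} (hj : j ≤ n) :
    #{x ∈ posSupport w | level w x ≤ j} ≤ ∑ i ∈ range (j + 1), n.choose i := by
  by_contra! hA
  rcases hj.lt_or_eq with hj | rfl
  · obtain ⟨φ, hφA, hφ⟩ := exists_selection_sum_ip_ge _ (j + 1) hA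
    simp only [mem_filter, mem_posSupport] at hφA
    have hlt : ∑ c, (ip c (φ c) + (wRad w - (j + 1))) <
        ∑ c, (ip c (φ c) + Real.logb 2 (w (φ c))) :=
      sum_lt_sum_of_nonempty univ_nonempty fun c _ => by
        linarith [wRad_sub_lt_of_level_le w hj (hφA c).2]
    have hle := sum_ip_add_logb_le w φ fun c => (hφA c).1
    rw [sum_add_distrib, sum_const, card_univ, Fintype.card_fun, Fintype.card_bool,
      Fintype.card_fin, nsmul_eq_mul] at hlt
    rw [Fintype.card_fin] at hle
    push_cast at hlt hφ
    nlinarith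
  · rw [Nat.sum_range_choose] at hA
    have := card_le_univ {x ∈ posSupport w | level w x ≤ j}
    simp only [Fintype.card_fun, Fintype.card_bool, Fintype.card_fin] at this
    omega

end Levels

lemma sum_choose_mul_binomial_weight (n : ℕ) (β : ℝ) :
    ∑ j ∈ range (n + 1), (n.choose j : ℝ) * ((1 - β) ^ (n - j) * β ^ j) = 1 := by
  have h := add_pow β (1 - β) n
  rw [add_sub_cancel, one_pow] at h
  exact (sum_congr rfl fun j _ => by ring).trans h.symm

lemma binomial_weight_succ_le {n j : ℕ} {β : ℝ} (hβ0 : 0 ≤ β) (hβ : β ≤ 1 - β) (hj : j < n) :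
    (1 - β) ^ (n - (j + 1)) * β ^ (j + 1) ≤ (1 - β) ^ (n - j) * β ^ j := by
  rw [show n - j = n - (j + 1) + 1 by omega, pow_succ, pow_succ]
  have := mul_nonneg (pow_nonneg (hβ0.trans hβ) (n - (j + 1))) (pow_nonneg hβ0 j)
  nlinarith

theorem stmt14_general (n : ℕ) (w : (Fin n → Bool) → ℝ)
    (hw : ∀ x, 0 ≤ w x) (hsupp : ∃ x, 0 < w x)
    (β : ℝ) (hβ0 : 0 < β) (hβ1 : β ≤ 1 / 2) :
    ∃ xbar : Fin n → Bool, 0 < w xbar ∧ ∃ m : ℕ, m ≤ n ∧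
      wRad w ≥ Real.logb 2 (w xbar) + m ∧
      w xbar ≥ (1 - β) ^ (n - m) * β ^ m * Zw w := by
  set f : ℕ → ℝ := fun j => (1 - β) ^ (n - j) * β ^ j
  have hsum : ∑ x ∈ posSupport w, f (level w x) ≤ 1 :=
    (sum_comp_le_of_card_filter_le n.choose n _ _ f (fun x _ => level_le w x)
      (fun j hj => binomial_weight_succ_le hβ0.le (by linarith) hj)
      (mul_nonneg (pow_nonneg (by linarith) _) (pow_nonneg hβ0.le _))
      fun j hj => card_level_le w hj).trans_eq (sum_choose_mul_binomial_weight n β)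
  have hZ : Zw w = ∑ x ∈ posSupport w, w x :=
    (sum_filter_of_ne fun x _ hx => (hw x).lt_of_ne' hx).symm
  obtain ⟨x, hx, hle⟩ := exists_le_of_sum_le (f := fun x => f (level w x) * Zw w) (g := w)
    (by obtain ⟨x, hx⟩ := hsupp; exact ⟨x, mem_posSupport.2 hx⟩)
    (by rw [← sum_mul, ← hZ]; exact mul_le_of_le_one_left (sum_nonneg fun x _ => hw x) hsum)
  rw [mem_posSupport] at hx
  exact ⟨x, hx, level w x, level_le w x, by linarith [level_le_wRad_sub w hx], hle⟩

theorem stmt14 (n : ℕ) (hn : 0 < n) (w : (Fin n → Bool) → ℝ)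
    (hw : ∀ x, 0 ≤ w x) (hsupp : ∃ x, 0 < w x)
    (β : ℝ) (hβ0 : 0 < β) (hβ1 : β ≤ 1 / 2) :
    ∃ xbar : Fin n → Bool, 0 < w xbar ∧ ∃ m : ℕ, m ≤ n ∧
      wRad w ≥ Real.logb 2 (w xbar) + m ∧
      w xbar ≥ (1 - β) ^ (n - m) * β ^ m * Zw w :=
  stmt14_general n w hw hsupp β hβ0 hβ1
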